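/- arXiv:math/0008067 — 3 statements merged into one kernel-verified Lean document; each statement's English description precedes it below -/
import Mathlib

section
/- Define the change of variables \tilde{Q} by z + \tilde{Q}(-z) = (z + Q(-z)) \exp(\sum_{m\ge 1} a_m z^{2m-1}), where Q(c) = Q_0 + Q_1 c + Q_2 c^2 + .... Then the map (a_1, a_2, ...) \mapsto \tilde{Q}(Q, a) is the flow of the commuting family of linear vector fields L_m := \partial_{Q_{2m}} - \sum_{k\ge 0} Q_k \partial_{Q_{k+2m-1}}; that is, \partial \tilde{Q}/\partial a_m applied to any coefficient agrees with the action of multiplication by -c^{2m-1} on the shifted series c + Q(c) in the sense that \partial_{a_m}(z + \tilde{Q}(-z)) = z^{2m-1}(z + \tilde{Q}(-z)). -/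
open PowerSeries

/-!
The exponential factor `G = exp A`, `A = ∑ₖ aₖ X^(2k-1)`, is pinned down by `G' = A' G` and
`G(0) = 1`. Differentiating this ODE in `s = aₘ` shows that `∂ₛ G` solves
`H' = (X^(2m-1))' G + A' H` with `H(0) = 0`, an equation also solved by `X^(2m-1) G`; comparing
coefficients degree by degree (strong induction) gives `∂ₛ G = X^(2m-1) G`, and multiplying by the
`s`-independent factor `X + Q` gives the claim.
-/

section CoeffDeriv

variable {𝕜 : Type*} [NontriviallyNormedField 𝕜]

/-- Power series carry no norm, so differentiability in a parameter is taken coefficientwise. -/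
def HasCoeffDerivAt (f : 𝕜 → 𝕜⟦X⟧) (f' : 𝕜⟦X⟧) (s₀ : 𝕜) : Prop :=
  ∀ n, HasDerivAt (fun s => coeff n (f s)) (coeff n f') s₀

theorem hasDerivAt_coeff_mul {f g : 𝕜 → 𝕜⟦X⟧} {f' g' : 𝕜⟦X⟧} {s₀ : 𝕜} {n : ℕ}
    (hf : ∀ k ≤ n, HasDerivAt (fun s => coeff k (f s)) (coeff k f') s₀)
    (hg : ∀ k ≤ n, HasDerivAt (fun s => coeff k (g s)) (coeff k g') s₀) :
    HasDerivAt (fun s => coeff n (f s * g s)) (coeff n (f' * g s₀ + f s₀ * g')) s₀ := by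
  simp only [coeff_mul, map_add, ← Finset.sum_add_distrib]
  refine HasDerivAt.fun_sum fun p hp => ?_
  rw [Finset.HasAntidiagonal.mem_antidiagonal] at hp
  exact (hf p.1 (by omega)).mul (hg p.2 (by omega))

theorem hasCoeffDerivAt_const (c : 𝕜⟦X⟧) (s₀ : 𝕜) : HasCoeffDerivAt (fun _ => c) 0 s₀ :=
  fun n => by simpa only [map_zero] using hasDerivAt_const s₀ (coeff n c)

theorem HasCoeffDerivAt.mul {f g : 𝕜 → 𝕜⟦X⟧} {f' g' : 𝕜⟦X⟧} {s₀ : 𝕜}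
    (hf : HasCoeffDerivAt f f' s₀) (hg : HasCoeffDerivAt g g' s₀) :
    HasCoeffDerivAt (fun s => f s * g s) (f' * g s₀ + f s₀ * g') s₀ :=
  fun _ => hasDerivAt_coeff_mul (fun k _ => hf k) (fun k _ => hg k)

theorem HasCoeffDerivAt.derivative {f : 𝕜 → 𝕜⟦X⟧} {f' : 𝕜⟦X⟧} {s₀ : 𝕜}
    (h : HasCoeffDerivAt f f' s₀) :
    HasCoeffDerivAt (fun s => d⁄dX 𝕜 (f s)) (d⁄dX 𝕜 f') s₀ :=
  fun n => by simpa only [coeff_derivative] using (h (n + 1)).mul_const ((n : 𝕜) + 1)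

theorem HasCoeffDerivAt.of_derivative_eq_mul [CharZero 𝕜] {G A : 𝕜 → 𝕜⟦X⟧} {A' H : 𝕜⟦X⟧}
    {s₀ : 𝕜} (hG : ∀ s, d⁄dX 𝕜 (G s) = A s * G s)
    (hG0 : ∀ s, constantCoeff (G s) = constantCoeff (G s₀)) (hA : HasCoeffDerivAt A A' s₀)
    (hH : d⁄dX 𝕜 H = A' * G s₀ + A s₀ * H) (hH0 : constantCoeff H = 0) :
    HasCoeffDerivAt G H s₀ := by
  intro n
  induction n using Nat.strong_induction_on with
  | _ n ih =>
  cases n with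
  | zero =>
    simp only [coeff_zero_eq_constantCoeff_apply, hG0, hH0]
    exact hasDerivAt_const s₀ _
  | succ n =>
    have hn : ((n : 𝕜) + 1) ≠ 0 := n.cast_add_one_ne_zero
    have coeff_succ (F : 𝕜⟦X⟧) : coeff (n + 1) F = coeff n (d⁄dX 𝕜 F) / ((n : 𝕜) + 1) := by
      rw [coeff_derivative, mul_div_cancel_right₀ _ hn]
    simp only [coeff_succ, hG, hH]
    exact (hasDerivAt_coeff_mul (fun k _ => hA k) (fun k hk => ih k (by omega))).div_const _

/-- The odd series `∑_{k ≥ 1} a k * X^(2k-1)`; the value `a 0` does not enter. -/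
noncomputable def oddSeries {R : Type*} [Semiring R] (a : ℕ → R) : R⟦X⟧ :=
  mk fun n => if n % 2 = 1 then a ((n + 1) / 2) else 0

theorem coeff_derivative_oddSeries {R : Type*} [CommSemiring R] (a : ℕ → R) (n : ℕ) :
    coeff n (d⁄dX R (oddSeries a)) =
      if n % 2 = 0 then ((n + 1 : ℕ) : R) * a ((n + 2) / 2) else 0 := by
  rw [coeff_derivative, oddSeries, coeff_mk]
  by_cases hn : n % 2 = 0
  · rw [if_pos (by omega), if_pos hn, mul_comm]
    push_cast
    rfl
  · rw [if_neg (by omega), if_neg hn, zero_mul]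

theorem hasCoeffDerivAt_oddSeries_update (a : ℕ → 𝕜) {m : ℕ} (hm : 1 ≤ m) (s₀ : 𝕜) :
    HasCoeffDerivAt (fun s => oddSeries (Function.update a m s)) (X ^ (2 * m - 1)) s₀ := by
  intro n
  simp only [oddSeries, coeff_mk, coeff_X_pow]
  by_cases hn : n = 2 * m - 1
  · have hm' : (n + 1) / 2 = m := by omega
    simpa only [if_pos (show n % 2 = 1 by omega), hm', Function.update_self, if_pos hn]
      using hasDerivAt_id' s₀
  · have hconst (s : 𝕜) : (if n % 2 = 1 then Function.update a m s ((n + 1) / 2) else 0) =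
        if n % 2 = 1 then a ((n + 1) / 2) else 0 := by
      split_ifs with hodd
      · exact Function.update_of_ne (by omega) _ _
      · rfl
    simpa only [hconst, if_neg hn] using hasDerivAt_const s₀ _

/-- `∂/∂aₘ exp(oddSeries a) = X^(2m-1) exp(oddSeries a)`, the exponential being given by its ODE. -/
theorem hasCoeffDerivAt_of_derivative_eq_derivative_oddSeries_mul [CharZero 𝕜]
    (a : ℕ → 𝕜) {m : ℕ} (hm : 1 ≤ m) {G : 𝕜 → 𝕜⟦X⟧} {s₀ : 𝕜}
    (hG : ∀ s, d⁄dX 𝕜 (G s) = d⁄dX 𝕜 (oddSeries (Function.update a m s)) * G s)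
    (hG0 : ∀ s, constantCoeff (G s) = constantCoeff (G s₀)) :
    HasCoeffDerivAt G (X ^ (2 * m - 1) * G s₀) s₀ := by
  refine .of_derivative_eq_mul hG hG0 (hasCoeffDerivAt_oddSeries_update a hm s₀).derivative
    ?_ ?_
  · rw [Derivation.leibniz, hG, smul_eq_mul, smul_eq_mul]
    ring
  · rw [map_mul, map_pow, constantCoeff_X, zero_pow (by omega), zero_mul]

end CoeffDeriv

/-- with `z + Q̃(-z) := (z + Q(-z)) · exp(∑_m a_m z^{2m-1})` (the exponential
factor `E s` characterized by its ODE recursion, with the parameter `a_m` set to `s`),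
the flow in the parameter `a_m` satisfies
`∂_{a_m} (z + Q̃(-z)) = z^{2m-1} (z + Q̃(-z))`, i.e. it is the flow of the linear vector
field `L_m` (multiplication by `-c^{2m-1}` on the shifted series `c + Q(c)`). -/
theorem stmt7 (q a : ℕ → ℝ) (m : ℕ) (hm : 1 ≤ m)
    (E : ℝ → ℕ → ℝ)
    (hE0 : ∀ s, E s 0 = 1)
    (hErec : ∀ s : ℝ, ∀ n : ℕ, ((n : ℝ) + 1) * E s (n + 1) =
      ∑ p ∈ Finset.HasAntidiagonal.antidiagonal n,
        (if p.1 % 2 = 0 then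
            ((p.1 + 1 : ℕ) : ℝ) * (Function.update a m s) ((p.1 + 2) / 2)
          else 0) * E s p.2)
    (F : ℝ → PowerSeries ℝ)
    (hF : ∀ s, F s = (PowerSeries.X + PowerSeries.mk q) * PowerSeries.mk (E s)) :
    ∀ (n : ℕ) (s₀ : ℝ),
      HasDerivAt (fun s => PowerSeries.coeff (R := ℝ) n (F s))
        (PowerSeries.coeff (R := ℝ) n
          ((PowerSeries.X : PowerSeries ℝ) ^ (2 * m - 1) * F s₀)) s₀ := by
  intro n s₀
  have hE (s : ℝ) : d⁄dX ℝ (PowerSeries.mk (E s)) =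
      d⁄dX ℝ (oddSeries (Function.update a m s)) * PowerSeries.mk (E s) := by
    ext k
    rw [coeff_derivative, coeff_mk, mul_comm, hErec, coeff_mul]
    refine Finset.sum_congr rfl fun p _ => ?_
    rw [coeff_derivative_oddSeries, coeff_mk]
  have hexp := hasCoeffDerivAt_of_derivative_eq_derivative_oddSeries_mul a hm (s₀ := s₀) hE
    fun s => by simp only [constantCoeff_mk, hE0]
  have hprod := (hasCoeffDerivAt_const (X + PowerSeries.mk q) s₀).mul hexp n
  simp only [hF, zero_mul, zero_add] at hprod ⊢
  rwa [mul_left_comm]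
end

section
/- The vector fields L_m := \partial_{Q_{2m}} - \sum_{k\ge 0} Q_k \partial_{Q_{k+2m-1}} on the space of sequences (Q_0, Q_1, Q_2, ...) commute pairwise: [L_m, L_{m'}] = 0 for all m, m' \ge 1. -/
open MvPolynomial

/-- the vector fields `L_m = ∂_{Q_{2m}} - ∑_k Q_k ∂_{Q_{k+2m-1}}`
(as derivations of `ℚ[Q_0, Q_1, ...]`, with `L_m Q_j = δ_{j,2m} - Q_{j-2m+1}` for
`j ≥ 2m-1`) commute pairwise. -/
theorem stmt8
    (L : ℕ → Derivation ℚ (MvPolynomial ℕ ℚ) (MvPolynomial ℕ ℚ))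
    (hL : ∀ m j, L m (X j) =
      (if j = 2 * m then 1 else 0) -
      (if 2 * m - 1 ≤ j then X (j - (2 * m - 1)) else 0)) :
    ∀ m m' : ℕ, 1 ≤ m → 1 ≤ m' →
      ∀ p : MvPolynomial ℕ ℚ, L m (L m' p) = L m' (L m p) := by
  intro m m' hm hm' p
  have key : ∀ a b j : ℕ, 1 ≤ a → 1 ≤ b →
      L a (L b (X j)) =
        (if 2*a - 1 + (2*b - 1) ≤ j then X (j - (2*a - 1 + (2*b - 1))) else 0)
        - (if j = 2*a + 2*b - 1 then 1 else 0) := by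
    intro a b j ha hb
    rw [hL b j, map_sub]
    have h1 : L a (if j = 2*b then (1:MvPolynomial ℕ ℚ) else 0) = 0 := by
      split_ifs <;> simp
    rw [h1, zero_sub]
    by_cases hc : 2*b - 1 ≤ j
    · rw [if_pos hc, hL a, neg_sub]
      congr 1
      · by_cases hc2 : 2*a - 1 ≤ j - (2*b - 1)
        · rw [if_pos hc2, if_pos (by omega)]
          congr 1
          omega
        · rw [if_neg hc2, if_neg (by omega)]
      · by_cases hd : j - (2*b - 1) = 2*a
        · rw [if_pos hd, if_pos (by omega)]
        · rw [if_neg hd, if_neg (by omega)]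
    · rw [if_neg hc, map_zero, neg_zero, if_neg (by omega), if_neg (by omega),
        sub_zero]
  have keysym : ∀ j : ℕ, L m (L m' (X j)) = L m' (L m (X j)) := by
    intro j
    rw [key m m' j hm hm', key m' m j hm' hm]
    have e1 : 2*m - 1 + (2*m' - 1) = 2*m' - 1 + (2*m - 1) := by omega
    have e2 : 2*m + 2*m' - 1 = 2*m' + 2*m - 1 := by omega
    rw [e1, e2]
  have h : ⁅L m, L m'⁆ = 0 := by
    apply MvPolynomial.derivation_ext
    intro j
    simp [Derivation.commutator_apply, keysym j]
  have := DFunLike.congr_fun h p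
  simpa [Derivation.commutator_apply, sub_eq_zero] using this
end

section
/- Let D_m := (1/2) \sum_{k+l = 2m-2} (-1)^k \partial_{Q_k} \partial_{Q_l} and L_m := \partial_{Q_{2m}} - \sum_{k\ge 0} Q_k \partial_{Q_{k+2m-1}} act on (formal) functions of the variables Q_0, Q_1, .... Then the operators \hbar D_m + L_m commute pairwise for all m \ge 1: [\hbar D_m + L_m, \hbar D_{m'} + L_{m'}] = 0. -/
/-!
Write `E_c = ∑ₖ Q_k ∂_{k+c}`, so that `L_m = ∂_{2m} - E_{2m-1}`. The `∂_i`, `E_c` and `L_m` are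
derivations, and a commutator of derivations is a derivation, so every first-order commutator is
determined by its values on the generators: `[∂_i, E_c] = ∂_{i+c}` and `[E_c, E_{c'}] = 0`, hence
`[L_m, L_{m'}] = 0` and `[L_m, ∂_i] = ∂_{i+2m-1}`. The `D_m` commute because the `∂_i` do.

For the coefficient of `ħ`, the Leibniz rule for commutators and the symmetry `a ↔ b` of `D_m`
give `[L_{m'}, D_m] = ∑_{a+b=2m-2} (-1)^a ∂_a ∂_{b+2m'-1}`. With `N = 2m + 2m' - 3`, which is odd,
this is the partial sum over `a < 2m - 1` of `(-1)^a ∂_a ∂_{N-a}`, a sequence that changes sign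
under `a ↦ N - a`; partial sums of such a sequence of lengths `i` and `N + 1 - i` agree, so
`[L_{m'}, D_m] = [L_m, D_{m'}]`.
-/

open MvPolynomial Finset

theorem Finset.sum_range_eq_of_odd_of_antisymm {M : Type*} [AddCommGroup M] {f : ℕ → M} {N : ℕ}
    (hN : Odd N) (hf : ∀ a ≤ N, f (N - a) = -f a) {i j : ℕ} (hij : i + j = N + 1) :
    ∑ a ∈ range i, f a = ∑ a ∈ range j, f a := by
  have hsplit : ∀ i' j', i' + j' = N + 1 →
      ∑ a ∈ range (N + 1), f a = ∑ a ∈ range i', f a - ∑ a ∈ range j', f a := by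
    intro i' j' hij'
    have htail : ∑ a ∈ Ico i' (N + 1), f a = -∑ a ∈ range j', f a := by
      rw [sum_Ico_eq_sum_range, show N + 1 - i' = j' by omega, ← sum_range_reflect,
        ← sum_neg_distrib]
      refine sum_congr rfl fun a ha => ?_
      rw [mem_range] at ha
      rw [← hf _ (by omega)]
      congr 1
      omega
    rw [← sum_range_add_sum_Ico f (show i' ≤ N + 1 by omega), htail, sub_eq_add_neg]
  obtain ⟨k, rfl⟩ := hN
  have htotal := hsplit (k + 1) (k + 1) (by omega)
  rw [sub_self] at htotal
  rw [← sub_eq_zero, ← hsplit i j hij, htotal]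

theorem Derivation.sum_apply {R A M ι : Type*} [CommSemiring R] [CommSemiring A] [Algebra R A]
    [AddCommMonoid M] [Module A M] [Module R M] (s : Finset ι) (D : ι → Derivation R A M)
    (a : A) : (∑ i ∈ s, D i) a = ∑ i ∈ s, D i a :=
  map_sum ((Pi.evalAddMonoidHom _ a).comp Derivation.coeFnAddMonoidHom) D s

namespace MvPolynomial

section PartialDerivatives

variable {R σ : Type*} [CommRing R]

theorem lie_pderiv_pderiv (i j : σ) : ⁅pderiv (R := R) i, pderiv (R := R) j⁆ = 0 := by
  classical
  refine derivation_ext fun k => ?_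
  simp [Derivation.commutator_apply, pderiv_X, Pi.single_apply, apply_ite]

theorem commute_pderiv (i j : σ) :
    Commute (pderiv (R := R) i : Module.End R (MvPolynomial σ R))
      (pderiv (R := R) j : Module.End R (MvPolynomial σ R)) := by
  rw [commute_iff_lie_eq, ← Derivation.commutator_coe_linear_map, lie_pderiv_pderiv]
  rfl

end PartialDerivatives

variable {R : Type*} [CommRing R]

local notation "𝔇" => Derivation R (MvPolynomial ℕ R) (MvPolynomial ℕ R)
local notation "∂" i => (pderiv (R := R) i : Module.End R (MvPolynomial ℕ R))

variable (R) in
noncomputable def shiftDerivation (c : ℕ) : 𝔇 :=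
  mkDerivation R fun j => if c ≤ j then X (j - c) else 0

theorem shiftDerivation_X (c j : ℕ) :
    shiftDerivation R c (X j) = if c ≤ j then X (j - c) else 0 :=
  mkDerivation_X _ _ _

theorem shiftDerivation_apply (c : ℕ) (p : MvPolynomial ℕ R) :
    shiftDerivation R c p = ∑ᶠ k, X k * pderiv (k + c) p := by
  obtain ⟨n, hn⟩ : ∃ n, ∀ j ∈ p.vars, j < n :=
    ⟨p.vars.sup id + 1, fun j hj => Nat.lt_succ_of_le (le_sup (f := id) hj)⟩
  have hsupp : (Function.support fun k => (X k : MvPolynomial ℕ R) * pderiv (k + c) p) ⊆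
      range n :=
    Function.support_subset_iff'.2 fun k hk => by
      have hkc : k + c ∉ p.vars := fun h => hk (by simpa using (hn _ h).trans_le' (by omega))
      simp [pderiv_eq_zero_of_notMem_vars hkc]
  have htruncate : ∑ k ∈ range n, X k * pderiv (k + c) p =
      (∑ k ∈ range n, (X k : MvPolynomial ℕ R) • pderiv (R := R) (k + c)) p := by
    simp [Derivation.sum_apply]
  rw [finsum_eq_sum_of_support_subset _ hsupp, htruncate]
  refine derivation_eq_of_forall_mem_vars fun j hj => ?_
  simp only [shiftDerivation_X, Derivation.sum_apply, Derivation.smul_apply, pderiv_X,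
    Pi.single_apply, smul_eq_mul, mul_ite, mul_one, mul_zero]
  split_ifs with hcj
  · have hjn := hn j hj
    rw [Finset.sum_eq_single_of_mem (j - c) (mem_range.2 (by omega))
      fun k _ hk => if_neg (by omega), if_pos (by omega)]
  · exact (Finset.sum_eq_zero fun k _ => if_neg (by omega)).symm

theorem lie_pderiv_shiftDerivation (i c : ℕ) :
    ⁅pderiv (R := R) i, shiftDerivation R c⁆ = pderiv (i + c) := by
  refine derivation_ext fun j => ?_
  simp only [Derivation.commutator_apply, shiftDerivation_X, pderiv_X, Pi.single_apply,
    apply_ite (shiftDerivation R c), apply_ite (pderiv (R := R) i), Derivation.map_one_eq_zero,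
    map_zero]
  split_ifs <;> first | (exfalso; omega) | simp

theorem lie_shiftDerivation_shiftDerivation (c c' : ℕ) :
    ⁅shiftDerivation R c, shiftDerivation R c'⁆ = 0 := by
  refine derivation_ext fun j => ?_
  simp only [Derivation.commutator_apply, shiftDerivation_X, apply_ite (shiftDerivation R c),
    apply_ite (shiftDerivation R c'), map_zero, Nat.sub_sub, add_comm c c', Derivation.zero_apply]
  split_ifs <;> first | (exfalso; omega) | simp

variable (R) in
noncomputable def lDerivation (m : ℕ) : 𝔇 :=
  pderiv (2 * m) - shiftDerivation R (2 * m - 1)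

local notation "𝕃" m => (lDerivation R m : Module.End R (MvPolynomial ℕ R))

theorem lie_pderiv_lDerivation (i m : ℕ) :
    ⁅pderiv (R := R) i, lDerivation R m⁆ = -pderiv (i + (2 * m - 1)) := by
  rw [lDerivation, lie_sub (L := 𝔇), lie_pderiv_pderiv, lie_pderiv_shiftDerivation, zero_sub]

theorem lie_lDerivation_lDerivation {m m' : ℕ} (hm : 1 ≤ m) (hm' : 1 ≤ m') :
    ⁅lDerivation R m, lDerivation R m'⁆ = 0 := by
  rw [lDerivation, lDerivation, sub_lie (L := 𝔇) (M := 𝔇), lie_sub (L := 𝔇), lie_sub (L := 𝔇),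
    lie_pderiv_pderiv, lie_pderiv_shiftDerivation, ← lie_skew, lie_pderiv_shiftDerivation,
    lie_shiftDerivation_shiftDerivation, show 2 * m + (2 * m' - 1) = 2 * m' + (2 * m - 1) by omega]
  abel

theorem lDerivation_mul_pderiv_sub (m i : ℕ) :
    (𝕃 m) * (∂ i) - (∂ i) * (𝕃 m) = ∂ (i + (2 * m - 1)) := by
  rw [← Ring.lie_def, ← Derivation.commutator_coe_linear_map, ← lie_skew, lie_pderiv_lDerivation,
    neg_neg]

theorem commute_lDerivation {m m' : ℕ} (hm : 1 ≤ m) (hm' : 1 ≤ m') :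
    Commute (𝕃 m) (𝕃 m') := by
  rw [commute_iff_lie_eq, ← Derivation.commutator_coe_linear_map,
    lie_lDerivation_lDerivation hm hm']
  rfl

section SecondOrder

variable [Algebra ℚ R]

variable (R) in
noncomputable def dOp (m : ℕ) : Module.End R (MvPolynomial ℕ R) :=
  (1 / 2 : ℚ) • ∑ x ∈ antidiagonal (2 * m - 2), (-1 : ℚ) ^ x.1 • ((∂ x.1) * ∂ x.2)

variable (R) in
noncomputable def crossTerm (m c : ℕ) : Module.End R (MvPolynomial ℕ R) :=
  ∑ x ∈ antidiagonal (2 * m - 2), (-1 : ℚ) ^ x.1 • ((∂ x.1) * ∂ (x.2 + c))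

theorem commute_dOp (m m' : ℕ) : Commute (dOp R m) (dOp R m') := by
  refine .smul_left (.smul_right (.sum_left _ _ _ fun x _ => .sum_right _ _ _ fun y _ => ?_) _) _
  refine .smul_left (.smul_right ?_ _) _
  exact ((commute_pderiv _ _).mul_left (commute_pderiv _ _)).mul_right
    ((commute_pderiv _ _).mul_left (commute_pderiv _ _))

theorem sum_antidiagonal_pderiv_add_mul_swap {n : ℕ} (hn : Even n) (c : ℕ) :
    ∑ x ∈ antidiagonal n, (-1 : ℚ) ^ x.1 • ((∂ (x.1 + c)) * ∂ x.2) =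
      ∑ x ∈ antidiagonal n, (-1 : ℚ) ^ x.1 • ((∂ x.1) * ∂ (x.2 + c)) := by
  rw [← Finset.Nat.sum_antidiagonal_swap]
  refine Finset.sum_congr rfl fun x hx => ?_
  rw [HasAntidiagonal.mem_antidiagonal] at hx
  have hsign : (-1 : ℚ) ^ x.2 = (-1 : ℚ) ^ x.1 := by
    rw [neg_one_pow_eq_pow_mod_two, neg_one_pow_eq_pow_mod_two (n := x.1)]
    obtain ⟨k, hk⟩ := hn
    congr 1
    omega
  rw [Prod.fst_swap, Prod.snd_swap, hsign, (commute_pderiv _ _).eq]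

theorem lDerivation_mul_dOp_sub (m m' : ℕ) :
    (𝕃 m') * dOp R m - dOp R m * (𝕃 m') = crossTerm R m (2 * m' - 1) := by
  have hterm : ∀ a b : ℕ, (𝕃 m') * ((∂ a) * ∂ b) - (∂ a) * (∂ b) * (𝕃 m') =
      (∂ (a + (2 * m' - 1))) * (∂ b) + (∂ a) * (∂ (b + (2 * m' - 1))) := by
    intro a b
    calc (𝕃 m') * ((∂ a) * ∂ b) - (∂ a) * (∂ b) * (𝕃 m')
        = ((𝕃 m') * (∂ a) - (∂ a) * (𝕃 m')) * (∂ b) +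
            (∂ a) * ((𝕃 m') * (∂ b) - (∂ b) * (𝕃 m')) := by
          simp only [mul_sub, sub_mul, mul_assoc]
          abel
      _ = _ := by rw [lDerivation_mul_pderiv_sub, lDerivation_mul_pderiv_sub]
  have hsplit : (𝕃 m') * dOp R m - dOp R m * (𝕃 m') =
      (1 / 2 : ℚ) • ∑ x ∈ antidiagonal (2 * m - 2),
        (-1 : ℚ) ^ x.1 • ((𝕃 m') * ((∂ x.1) * ∂ x.2) - (∂ x.1) * (∂ x.2) * (𝕃 m')) := by
    simp only [dOp, smul_mul_assoc, mul_smul_comm, Finset.sum_mul, Finset.mul_sum, smul_sub,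
      Finset.sum_sub_distrib]
  rw [hsplit]
  simp only [hterm, smul_add, Finset.sum_add_distrib]
  rw [sum_antidiagonal_pderiv_add_mul_swap ⟨m - 1, by omega⟩, ← crossTerm, ← two_smul ℚ,
    smul_smul]
  norm_num

theorem crossTerm_symm {m m' : ℕ} (hm : 1 ≤ m) (hm' : 1 ≤ m') :
    crossTerm R m (2 * m' - 1) = crossTerm R m' (2 * m - 1) := by
  let f (N a : ℕ) : Module.End R (MvPolynomial ℕ R) := (-1 : ℚ) ^ a • ((∂ a) * ∂ (N - a))
  have hrange : ∀ n n', 1 ≤ n → 1 ≤ n' →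
      crossTerm R n (2 * n' - 1) = ∑ a ∈ range (2 * n - 1), f (2 * n + 2 * n' - 3) a := by
    intro n n' hn hn'
    rw [crossTerm, Finset.Nat.sum_antidiagonal_eq_sum_range_succ_mk,
      show (2 * n - 2).succ = 2 * n - 1 by omega]
    refine sum_congr rfl fun a ha => ?_
    rw [mem_range] at ha
    simp only [f, show 2 * n - 2 - a + (2 * n' - 1) = 2 * n + 2 * n' - 3 - a by omega]
  obtain ⟨N, hN⟩ : ∃ N, 2 * m + 2 * m' - 3 = N := ⟨_, rfl⟩
  have hodd : Odd N := ⟨m + m' - 2, by omega⟩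
  have hanti : ∀ a ≤ N, f N (N - a) = -f N a := by
    intro a ha
    have hsign : (-1 : ℚ) ^ (N - a) = -(-1 : ℚ) ^ a := by
      rcases Nat.even_or_odd a with hpar | hpar
      · rw [hpar.neg_one_pow, (Nat.Odd.sub_even ha hodd hpar).neg_one_pow]
      · rw [hpar.neg_one_pow, (Nat.Odd.sub_odd hodd hpar).neg_one_pow, neg_neg]
    simp only [f, hsign, Nat.sub_sub_self ha, (commute_pderiv _ _).eq]
    exact neg_smul ((-1 : ℚ) ^ a) ((∂ a) * ∂ (N - a))
  rw [hrange m m' hm hm', hrange m' m hm' hm, show 2 * m' + 2 * m - 3 = N by omega, hN]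
  exact Finset.sum_range_eq_of_odd_of_antisymm hodd hanti (by omega)

theorem commute_smul_dOp_add_lDerivation (h : R) {m m' : ℕ} (hm : 1 ≤ m) (hm' : 1 ≤ m') :
    Commute (h • dOp R m + 𝕃 m) (h • dOp R m' + 𝕃 m') := by
  have hDD := (commute_dOp (R := R) m m').eq
  have hLL := (commute_lDerivation (R := R) hm hm').eq
  have hDL : (𝕃 m') * dOp R m - dOp R m * (𝕃 m') = (𝕃 m) * dOp R m' - dOp R m' * (𝕃 m) := by
    rw [lDerivation_mul_dOp_sub, lDerivation_mul_dOp_sub, crossTerm_symm hm hm']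
  simp only [Commute, SemiconjBy, add_mul, mul_add, smul_mul_assoc, mul_smul_comm]
  linear_combination (norm := module) (h * h) • hDD - h • hDL + hLL

end SecondOrder

end MvPolynomial

/-- the operators `ħ D_m + L_m` with
`D_m = (1/2) ∑_{k+l=2m-2} (-1)^k ∂_{Q_k} ∂_{Q_l}` and
`L_m = ∂_{Q_{2m}} - ∑_k Q_k ∂_{Q_{k+2m-1}}` commute pairwise (acting on
polynomials in `Q_0, Q_1, ...` over `ℚ[ħ]`, `ħ` central). -/
theorem stmt9
    (hbar : MvPolynomial ℕ (Polynomial ℚ))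
    (hhbar : hbar = MvPolynomial.C Polynomial.X)
    (D L Op : ℕ → MvPolynomial ℕ (Polynomial ℚ) → MvPolynomial ℕ (Polynomial ℚ))
    (hD : ∀ m p, D m p = (1 / 2 : ℚ) •
      ∑ x ∈ Finset.HasAntidiagonal.antidiagonal (2 * m - 2),
        ((-1 : ℚ) ^ x.1) • pderiv x.1 (pderiv x.2 p))
    (hL : ∀ m p, L m p =
      pderiv (2 * m) p - ∑ᶠ k : ℕ, X k * pderiv (k + (2 * m - 1)) p)
    (hOp : ∀ m p, Op m p = hbar * D m p + L m p) :
    ∀ m m' : ℕ, 1 ≤ m → 1 ≤ m' →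
      ∀ p, Op m (Op m' p) = Op m' (Op m p) := by
  have hOp_eq : ∀ m, Op m = ⇑((Polynomial.X : Polynomial ℚ) • dOp (Polynomial ℚ) m +
      (lDerivation (Polynomial ℚ) m :
        Module.End (Polynomial ℚ) (MvPolynomial ℕ (Polynomial ℚ)))) := by
    intro m
    funext p
    simp [hOp, hD, hL, hhbar, dOp, lDerivation, shiftDerivation_apply, LinearMap.sum_apply, C_mul',
      smul_comm (2⁻¹ : ℚ)]
  intro m m' hm hm' p
  rw [hOp_eq, hOp_eq, ← Module.End.mul_apply, ← Module.End.mul_apply,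
    (commute_smul_dOp_add_lDerivation _ hm hm').eq]
end
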